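/- For a ≤ b and any (x1,x2,x3) ∈ ℕ^3 with x2 + b < d: (x1,x2,x3)·3^a 2^b 3^c 1^d 2^e = (x1+d, e, max(0, x2+c−d+b−e, x2+c−d+x3+a−e)). -/
import Mathlib


/-- Action of a letter of `{1,2,3}` (encoded as `Fin 3`) on a row identified
with its multiplicity vector `(x₁,x₂,x₃) ∈ ℕ³`. -/
def act3 (x : ℕ × ℕ × ℕ) (j : Fin 3) : ℕ × ℕ × ℕ :=
  if j = 0 then
    if 0 < x.2.1 then (x.1 + 1, x.2.1 - 1, x.2.2)
    else if 0 < x.2.2 then (x.1 + 1, x.2.1, x.2.2 - 1)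
    else (x.1 + 1, x.2.1, x.2.2)
  else if j = 1 then (x.1, x.2.1 + 1, x.2.2 - 1)
  else (x.1, x.2.1, x.2.2 + 1)

/-- Action of a word, composing letter actions from left to right. -/
def actW3 (x : ℕ × ℕ × ℕ) (w : List (Fin 3)) : ℕ × ℕ × ℕ :=
  w.foldl act3 x

lemma act3_two (x1 x2 x3 : ℕ) : act3 (x1, x2, x3) 2 = (x1, x2, x3 + 1) := rfl

lemma act3_one (x1 x2 x3 : ℕ) : act3 (x1, x2, x3) 1 = (x1, x2 + 1, x3 - 1) := rfl

lemma act3_zero (x1 x2 x3 : ℕ) :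
    act3 (x1, x2, x3) 0 =
      if 0 < x2 then (x1 + 1, x2 - 1, x3)
      else if 0 < x3 then (x1 + 1, x2, x3 - 1)
      else (x1 + 1, x2, x3) := rfl

lemma actW3_cons (x : ℕ × ℕ × ℕ) (j : Fin 3) (l : List (Fin 3)) :
    actW3 x (j :: l) = actW3 (act3 x j) l := rfl

lemma actW3_append (x : ℕ × ℕ × ℕ) (l1 l2 : List (Fin 3)) :
    actW3 x (l1 ++ l2) = actW3 (actW3 x l1) l2 := by
  simp [actW3, List.foldl_append]

lemma actW3_rep2 (x1 x2 x3 n : ℕ) :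
    actW3 (x1, x2, x3) (List.replicate n 2) = (x1, x2, x3 + n) := by
  induction n generalizing x3 with
  | zero => simp [actW3]
  | succ n ih =>
      rw [List.replicate_succ, actW3_cons, act3_two, ih]
      refine Prod.ext rfl (Prod.ext rfl ?_)
      simp; omega

lemma actW3_rep1 (x1 x2 x3 n : ℕ) :
    actW3 (x1, x2, x3) (List.replicate n 1) = (x1, x2 + n, x3 - n) := by
  induction n generalizing x2 x3 with
  | zero => simp [actW3]
  | succ n ih =>
      rw [List.replicate_succ, actW3_cons, act3_one, ih]
      refine Prod.ext rfl (Prod.ext ?_ ?_) <;> simp <;> omega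

lemma actW3_rep0 (x1 x2 x3 d : ℕ) (h : x2 < d) :
    actW3 (x1, x2, x3) (List.replicate d 0) = (x1 + d, 0, x3 - (d - x2)) := by
  induction d generalizing x1 x2 x3 with
  | zero => omega
  | succ d ih =>
      rw [List.replicate_succ, actW3_cons, act3_zero]
      by_cases h2 : 0 < x2
      · rw [if_pos h2, ih _ _ _ (by omega)]
        refine Prod.ext (by simp; omega) (Prod.ext rfl ?_)
        simp; omega
      · have hx2 : x2 = 0 := by omega
        subst hx2
        rw [if_neg (by omega)]
        rcases Nat.eq_zero_or_pos d with hd | hd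
        · subst hd
          by_cases h3 : 0 < x3
          · rw [if_pos h3]
            simp [actW3]
          · rw [if_neg h3]
            simp [actW3]; omega
        · by_cases h3 : 0 < x3
          · rw [if_pos h3, ih _ _ _ (by omega)]
            refine Prod.ext (by simp; omega) (Prod.ext rfl ?_)
            simp; omega
          · rw [if_neg h3, ih _ _ _ (by omega)]
            refine Prod.ext (by simp; omega) (Prod.ext rfl ?_)
            simp; omega

/-- explicit value of the action of `3^a 2^b 3^c 1^d 2^e`
when `x₂ + b < d` (Case 2). -/
theorem act_case2 (a b c d e x1 x2 x3 : ℕ) (hab : a ≤ b)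
    (hx : x2 + b < d) :
    actW3 (x1, x2, x3)
        (List.replicate a 2 ++ List.replicate b 1 ++ List.replicate c 2 ++
          List.replicate d 0 ++ List.replicate e 1) =
      (x1 + d, e,
        (((x2 : ℤ) + c - d + b - e) ⊔ ((x2 : ℤ) + c - d + x3 + a - e)).toNat) := by
  rw [actW3_append, actW3_append, actW3_append, actW3_append,
    actW3_rep2 x1 x2 x3 a, actW3_rep1 x1 x2 (x3 + a) b,
    actW3_rep2 x1 (x2 + b) (x3 + a - b) c,
    actW3_rep0 x1 (x2 + b) (x3 + a - b + c) d (by omega),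
    actW3_rep1 (x1 + d) 0 (x3 + a - b + c - (d - (x2 + b))) e]
  refine Prod.ext rfl (Prod.ext (by simp) ?_)
  simp only
  rcases le_total ((x2 : ℤ) + c - d + b - e) ((x2 : ℤ) + c - d + x3 + a - e) with h | h
  · rw [sup_eq_right.mpr h]; omega
  · rw [sup_eq_left.mpr h]; omega
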